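/- If {A_k} is a sequence of complex n×n matrices such that for every I ⊆ {1,...,n} the principal minors P_I(A_k) form a bounded sequence in ℂ, then for every cyclic permutation π, the sequence of cycle monomial values c_π(A_k) is also bounded. -/

import Mathlib

/-- The principal minor of `A` with rows and columns indexed by `I`. -/
noncomputable def principalMinor {n : ℕ} {R : Type*} [CommRing R]
    (A : Matrix (Fin n) (Fin n) R) (I : Finset (Fin n)) : R :=
  (A.submatrix (fun i : {x // x ∈ I} => (i : Fin n))
    (fun j : {x // x ∈ I} => (j : Fin n))).det

/-!
Encode a cycle monomial as the product of the entries `A i j` over the edges `(i, j)` of the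
cycle, and induct on the length `|S|` of the cycle, where `S` is its support. Diagonal entries
are `1 × 1` principal minors. In the Leibniz expansion of `P_S`, every permutation of `S` that is
not a cycle with support `S` contributes a product of diagonal entries and monomials of shorter
cycles, and all cycles with support `S` have the same sign; so `e = ∑ γ, c_γ` over the cycles `γ`
with support `S` is bounded. For two such cycles `π ≠ γ`, the edges of `π` and `γ` together can be
regrouped into three closed walks, each of which misses a vertex of `S`; a closed walk splits at
its repeated vertices into simple cycles, so `c_π c_γ` is a product of monomials of shorter cycles.
Finally `c_π ^ 2 = c_π e - ∑_{γ ≠ π} c_π c_γ` makes `c_π` a root of a monic quadratic polynomial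
with bounded coefficients, hence bounded.
-/

open Equiv Finset
open scoped ENNReal

namespace List

variable {α : Type*}

def pathEdges (l : List α) : Multiset (α × α) := l.zip l.tail

def cycleEdges (l : List α) : Multiset (α × α) := l.zip (l.rotate 1)

@[simp] theorem pathEdges_cons_cons (a b : α) (l : List α) :
    pathEdges (a :: b :: l) = (a, b) ::ₘ pathEdges (b :: l) := rfl

theorem pathEdges_cons_append_cons (b a : α) (l₁ l₂ : List α) :
    pathEdges (b :: (l₁ ++ a :: l₂)) = pathEdges (b :: (l₁ ++ [a])) + pathEdges (a :: l₂) := by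
  induction l₁ generalizing b with
  | nil => simp [pathEdges]
  | cons c l₁ ih => simp [ih, Multiset.cons_add]

theorem cycleEdges_cons (a : α) (l : List α) :
    cycleEdges (a :: l) = pathEdges (a :: (l ++ [a])) := by
  simp only [cycleEdges, pathEdges, rotate_cons_succ, rotate_zero, tail_cons]
  rw [← cons_append]
  conv_rhs => rw [← append_nil (l ++ [a]), zip_append (by simp)]
  simp

theorem cycleEdges_splice (p q r : List α) (a : α) :
    cycleEdges (p ++ a :: q ++ a :: r) = cycleEdges (a :: q) + cycleEdges (a :: r ++ p) := by
  cases p with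
  | nil =>
    simp only [nil_append, append_nil, cons_append, append_assoc, cycleEdges_cons]
    rw [pathEdges_cons_append_cons a a q]
  | cons b p =>
    simp only [cons_append, append_assoc, cycleEdges_cons]
    rw [pathEdges_cons_append_cons b a p, pathEdges_cons_append_cons a a q,
      pathEdges_cons_append_cons a b r (p ++ [a])]
    abel

/-- When `a x ⋯ c ⋯` and `a c ⋯ x ⋯` are cyclic orders of the same set without repetitions,
the three closed walks on the right miss `c`, `x` and `a` respectively. -/
theorem cycleEdges_add_cycleEdges (a x c : α) (u₁ u₂ v₁ v₂ : List α) :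
    cycleEdges (a :: x :: (u₁ ++ c :: u₂)) + cycleEdges (a :: c :: (v₁ ++ x :: v₂)) =
      cycleEdges (x :: v₂ ++ [a]) + cycleEdges (c :: u₂ ++ [a]) +
        cycleEdges (c :: v₁ ++ x :: u₁) := by
  have h₁ := cycleEdges_splice [] (x :: u₁ ++ c :: u₂) (c :: v₁ ++ x :: v₂) a
  have h₂ := cycleEdges_splice [a] (u₁ ++ c :: u₂ ++ a :: c :: v₁) v₂ x
  have h₃ := cycleEdges_splice (x :: u₁) (u₂ ++ [a]) v₁ c
  simp only [nil_append, append_nil, cons_append, append_assoc] at h₁ h₂ h₃ ⊢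
  rw [← h₁, h₂, h₃]
  abel

theorem exists_eq_append_cons_append_cons_of_not_nodup {w : List α} (hw : ¬w.Nodup) :
    ∃ a p q r, w = p ++ a :: q ++ a :: r := by
  obtain ⟨a, ha⟩ : ∃ a, [a, a] <+ w := by simpa [nodup_iff_sublist] using hw
  obtain ⟨r₁, r₂, rfl, ha₁, ha₂⟩ := cons_sublist_iff.1 ha
  obtain ⟨p, q, rfl⟩ := append_of_mem ha₁
  obtain ⟨s, r, rfl⟩ := append_of_mem (singleton_sublist.1 ha₂)
  exact ⟨a, p, q ++ s, r, by simp⟩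

theorem cycleEdges_mem_of_forall_nodup {S : AddSubmonoid (Multiset (α × α))} (w : List α)
    (h : ∀ p : List α, p.Nodup → p ⊆ w → cycleEdges p ∈ S) : cycleEdges w ∈ S := by
  induction hn : w.length using Nat.strong_induction_on generalizing w with
  | _ n ih =>
  by_cases hw : w.Nodup
  · exact h w hw (Subset.refl w)
  obtain ⟨a, p, q, r, rfl⟩ := exists_eq_append_cons_append_cons_of_not_nodup hw
  rw [cycleEdges_splice]
  refine add_mem (ih _ ?_ _ (fun l hl hs => h l hl (Subset.trans hs ?_)) rfl)
    (ih _ ?_ _ (fun l hl hs => h l hl (Subset.trans hs ?_)) rfl)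
  · simp [← hn]; omega
  · grind
  · simp [← hn]; omega
  · grind

theorem Nodup.length_lt_of_subset {p u : List α} {y : α} (hp : p.Nodup) (hpu : p ⊆ u)
    (hy : y ∈ u) (hyp : y ∉ p) : p.length < u.length :=
  ((hp.cons hyp).subperm (cons_subset.2 ⟨hy, hpu⟩)).length_le

theorem cycleEdges_add_cycleEdges_mem {S : AddSubmonoid (Multiset (α × α))} {a x c : α}
    {u v : List α} (hu : (a :: x :: u).Nodup) (hv : (a :: c :: v).Nodup)
    (huv : a :: x :: u ~ a :: c :: v) (hxc : x ≠ c)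
    (h : ∀ p : List α, p.Nodup → p.length < u.length + 2 → cycleEdges p ∈ S) :
    cycleEdges (a :: x :: u) + cycleEdges (a :: c :: v) ∈ S := by
  have hcu : c ∈ u := by grind [huv.mem_iff (a := c)]
  have hxv : x ∈ v := by grind [huv.mem_iff (a := x)]
  have hwalk (w : List α) (hw : w ⊆ a :: x :: u) (y : α) (hy : y ∈ a :: x :: u) (hyw : y ∉ w) :
      cycleEdges w ∈ S :=
    cycleEdges_mem_of_forall_nodup w fun p hp hpw =>
      h p hp (by simpa [Nat.lt_succ_iff] using
        hp.length_lt_of_subset (Subset.trans hpw hw) hy (hyw <| hpw ·))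
  obtain ⟨u₁, u₂, rfl⟩ := append_of_mem hcu
  obtain ⟨v₁, v₂, rfl⟩ := append_of_mem hxv
  rw [cycleEdges_add_cycleEdges]
  refine add_mem (add_mem (hwalk _ ?_ c (by simp) ?_) (hwalk _ ?_ x (by simp) ?_))
    (hwalk _ ?_ a (by simp) ?_)
  all_goals grind

theorem zip_rotate_one_eq_map_formPerm [DecidableEq α] {l : List α} (hl : l.Nodup) :
    l.zip (l.rotate 1) = l.map fun i => (i, l.formPerm i) := by
  refine ext_getElem (by simp) fun i h₁ _ => ?_
  have hi : i < l.length := by simpa using h₁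
  rw [getElem_zip, getElem_map, getElem_rotate, formPerm_apply_getElem l hl i hi]

end List

namespace Equiv.Perm

variable {α : Type*} [Fintype α] [DecidableEq α]

theorem exists_toList_eq_cons_cons {p : Perm α} {x : α} (hx : x ∈ p.support) :
    ∃ l, p.toList x = x :: p x :: l := by
  obtain ⟨N, hN⟩ := Nat.exists_eq_add_of_le (two_le_length_toList_iff_mem_support.2 hx)
  rw [length_toList] at hN
  exact ⟨_, by rw [toList, hN, add_comm]; rfl⟩

theorem IsCycle.toFinset_toList {p : Perm α} (hp : p.IsCycle) {x : α} (hx : x ∈ p.support) :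
    (p.toList x).toFinset = p.support := by
  ext y
  simp only [List.mem_toFinset, mem_toList_iff, hx, and_true]
  exact ⟨fun h => h.mem_support_iff.1 hx,
    fun hy => hp.sameCycle (mem_support.1 hx) (mem_support.1 hy)⟩

theorem prod_support_eq_prod_cycleFactorsFinset {M : Type*} [CommMonoid M] (g : Perm α)
    (f : α → α → M) :
    ∏ i ∈ g.support, f i (g i) = ∏ c ∈ g.cycleFactorsFinset, ∏ i ∈ c.support, f i (c i) := by
  have hsupp : g.support = g.cycleFactorsFinset.biUnion support := by
    ext x
    rw [mem_biUnion, mem_support_iff_mem_support_of_mem_cycleFactorsFinset]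
  rw [hsupp, prod_biUnion fun c₁ h₁ c₂ h₂ hne =>
    disjoint_iff_disjoint_support.1 (cycleFactorsFinset_pairwise_disjoint g h₁ h₂ hne)]
  exact prod_congr rfl fun c hc => prod_congr rfl fun i hi => by
    rw [(mem_cycleFactorsFinset_iff.1 hc).2 i hi]

end Equiv.Perm

section PrincipalMinor

variable {n : ℕ} {R : Type*} [CommRing R] (M : Matrix (Fin n) (Fin n) R)

theorem principalMinor_eq_sum (S : Finset (Fin n)) :
    principalMinor M S =
      ∑ g : Perm (Fin n) with g.support ⊆ S, Perm.sign g • ∏ i ∈ S, M i (g i) := by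
  rw [principalMinor, ← Matrix.det_transpose, Matrix.det_apply,
    Fintype.sum_equiv (Perm.subtypeEquivSubtypePerm (· ∈ S)) _
      (fun g => Perm.sign g.1 • ∏ i ∈ S, M i (g.1 i))]
  · refine (Finset.sum_subtype (p := fun g : Perm (Fin n) => ∀ a, a ∉ S → g a = a) _
      (fun g => ?_) (fun g => Perm.sign g • ∏ i ∈ S, M i (g i))).symm
    simp only [mem_filter, mem_univ, true_and]
    exact ⟨fun h a ha => Perm.notMem_support.1 (ha <| h ·),
      fun h a ha => by_contra fun haS => Perm.mem_support.1 ha (h a haS)⟩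
  · intro σ
    rw [Perm.subtypeEquivSubtypePerm_apply_coe, Perm.sign_ofSubtype]
    congr 1
    rw [← Finset.prod_coe_sort S]
    exact prod_congr rfl fun i _ => by simp [Perm.ofSubtype_apply_of_mem σ i.2]

theorem principalMinor_singleton (i : Fin n) : principalMinor M {i} = M i i := by
  rw [principalMinor, Matrix.det_unique]
  rfl

end PrincipalMinor

section EdgeProd

variable {ι R : Type*} [CommMonoid R] (M : Matrix ι ι R)

def edgeProd (E : Multiset (ι × ι)) : R := (E.map fun e => M e.1 e.2).prod

@[simp] theorem edgeProd_zero : edgeProd M 0 = 1 := by simp [edgeProd]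

theorem edgeProd_add (E F : Multiset (ι × ι)) :
    edgeProd M (E + F) = edgeProd M E * edgeProd M F := by simp [edgeProd]

theorem edgeProd_cycleEdges [DecidableEq ι] {l : List ι} (hl : l.Nodup) :
    edgeProd M l.cycleEdges = ∏ i ∈ l.toFinset, M i (l.formPerm i) := by
  rw [edgeProd, List.cycleEdges, List.zip_rotate_one_eq_map_formPerm hl,
    List.prod_toFinset _ hl]
  simp [Function.comp_def]

theorem Equiv.Perm.IsCycle.prod_support_eq_edgeProd [Fintype ι] [DecidableEq ι] {c : Perm ι}
    (hc : c.IsCycle) {x : ι} (hx : x ∈ c.support) :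
    ∏ i ∈ c.support, M i (c i) = edgeProd M (c.toList x).cycleEdges := by
  rw [edgeProd_cycleEdges M (Perm.nodup_toList c x), hc.toFinset_toList hx, Perm.formPerm_toList,
    hc.cycleOf_eq (Perm.mem_support.1 hx)]

end EdgeProd

section Bounded

variable (β R : Type*) [NormedRing R] [NormOneClass R]

def boundedSubring : Subring (β → R) where
  carrier := {f | Memℓp f ∞}
  mul_mem' := Memℓp.infty_mul
  one_mem' := one_memℓp_infty
  add_mem' {_ _} (hf : Memℓp _ ∞) hg := hf.add hg
  zero_mem' := show Memℓp (0 : β → R) ∞ from zero_memℓp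
  neg_mem' {_} (hf : Memℓp _ ∞) := hf.neg

variable {β R}

theorem mem_boundedSubring_iff {f : β → R} :
    f ∈ boundedSubring β R ↔ ∃ C, ∀ k, ‖f k‖ ≤ C := by
  change Memℓp f ∞ ↔ _
  simp [memℓp_infty_iff, bddAbove_def]

theorem mem_boundedSubring_of_mul_self_eq {𝕜 : Type*} [NormedField 𝕜] {f s t : β → 𝕜}
    (hs : s ∈ boundedSubring β 𝕜) (ht : t ∈ boundedSubring β 𝕜) (h : f * f = f * s + t) :
    f ∈ boundedSubring β 𝕜 := by
  obtain ⟨S, hS⟩ := mem_boundedSubring_iff.1 hs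
  obtain ⟨T, hT⟩ := mem_boundedSubring_iff.1 ht
  -- if `1 ≤ ‖f k‖`, then `‖f k‖ * ‖f k‖ ≤ ‖f k‖ * (S + T)`
  refine mem_boundedSubring_iff.2 ⟨1 + S + T, fun k => ?_⟩
  have hk : ‖f k‖ * ‖f k‖ ≤ ‖f k‖ * S + T := calc
    ‖f k‖ * ‖f k‖ = ‖f k * s k + t k‖ := by rw [← norm_mul, ← Pi.mul_apply, h]; rfl
    _ ≤ ‖f k‖ * ‖s k‖ + ‖t k‖ := (norm_add_le _ _).trans_eq (by rw [norm_mul])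
    _ ≤ ‖f k‖ * S + T := by gcongr; exacts [hS k, hT k]
  nlinarith [norm_nonneg (f k), (norm_nonneg (s k)).trans (hS k), (norm_nonneg (t k)).trans (hT k)]

end Bounded

section BoundedEdgeSets

variable {β ι R : Type*} [NormedCommRing R] [NormOneClass R]

def boundedEdgeSets (A : β → Matrix ι ι R) : AddSubmonoid (Multiset (ι × ι)) where
  carrier := {E | (fun k => edgeProd (A k) E) ∈ boundedSubring β R}
  zero_mem' := by simp only [Set.mem_ofPred_eq, edgeProd_zero]; exact one_mem _
  add_mem' {E F} hE hF := by
    simp only [Set.mem_ofPred_eq, edgeProd_add] at *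
    exact mul_mem hE hF

theorem mem_boundedEdgeSets {A : β → Matrix ι ι R} {E : Multiset (ι × ι)} :
    E ∈ boundedEdgeSets A ↔ (fun k => edgeProd (A k) E) ∈ boundedSubring β R :=
  Iff.rfl

end BoundedEdgeSets

section Cycles

variable {β ι R : Type*} [Fintype ι] [DecidableEq ι] [NormedCommRing R] [NormOneClass R]
  {A : β → Matrix ι ι R} {S : Finset ι}

open Classical in
noncomputable def cyclesWithSupport (S : Finset ι) : Finset (Perm ι) :=
  {g | g.IsCycle ∧ g.support = S}

@[simp] theorem mem_cyclesWithSupport {g : Perm ι} :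
    g ∈ cyclesWithSupport S ↔ g.IsCycle ∧ g.support = S := by
  simp [cyclesWithSupport]

theorem prod_mem_boundedSubring_of_notMem_cyclesWithSupport (hS : 1 < S.card)
    (hshort : ∀ l : List ι, l.Nodup → l.length < S.card → l.cycleEdges ∈ boundedEdgeSets A)
    {g : Perm ι} (hg : g.support ⊆ S) (hgC : g ∉ cyclesWithSupport S) :
    (fun k => ∏ i ∈ S, A k i (g i)) ∈ boundedSubring β R := by
  have hdiag (i : ι) : (fun k => A k i i) ∈ boundedSubring β R := by
    simpa [mem_boundedEdgeSets, edgeProd, List.cycleEdges] using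
      hshort [i] (List.nodup_singleton i) (by simpa)
  have hcycle (c : Perm ι) (hc : c ∈ g.cycleFactorsFinset) :
      (fun k => ∏ i ∈ c.support, A k i (c i)) ∈ boundedSubring β R := by
    have hcS : c.support ⊆ S := (Perm.mem_cycleFactorsFinset_support_le hc).trans hg
    obtain ⟨hc, hcg⟩ := Perm.mem_cycleFactorsFinset_iff.1 hc
    obtain ⟨x, hx⟩ := hc.nonempty_support
    have hlt : c.support.card < S.card := by
      refine card_lt_card (ssubset_of_subset_of_ne hcS fun hcS' => hgC ?_)
      have hgc : g = c := Perm.support_congr (hcS' ▸ hg) fun x hx => (hcg x hx).symm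
      exact mem_cyclesWithSupport.2 (hgc ▸ ⟨hc, hcS'⟩)
    simp_rw [hc.prod_support_eq_edgeProd _ hx]
    refine hshort _ (Perm.nodup_toList c x) ?_
    rwa [Perm.length_toList, hc.cycleOf_eq (Perm.mem_support.1 hx)]
  have hsplit (k : β) : ∏ i ∈ S, A k i (g i) = (∏ i ∈ S \ g.support, A k i i) *
      ∏ c ∈ g.cycleFactorsFinset, ∏ i ∈ c.support, A k i (c i) := by
    rw [← prod_sdiff hg, g.prod_support_eq_prod_cycleFactorsFinset fun i j => A k i j]
    congr 1
    exact prod_congr rfl fun i hi => by rw [Perm.notMem_support.1 (mem_sdiff.1 hi).2]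
  convert mul_mem (prod_mem fun i (_ : i ∈ S \ g.support) => hdiag i) (prod_mem hcycle) using 1
  ext k
  simp [Finset.prod_apply, hsplit]

theorem mul_mem_boundedSubring_of_mem_cyclesWithSupport
    (hshort : ∀ l : List ι, l.Nodup → l.length < S.card → l.cycleEdges ∈ boundedEdgeSets A)
    {π γ : Perm ι} (hπ : π ∈ cyclesWithSupport S) (hγ : γ ∈ cyclesWithSupport S) (hne : π ≠ γ) :
    (fun k => (∏ i ∈ S, A k i (π i)) * ∏ i ∈ S, A k i (γ i)) ∈ boundedSubring β R := by
  rw [mem_cyclesWithSupport] at hπ hγ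
  obtain ⟨a, ha⟩ : ∃ a, π a ≠ γ a := not_forall.1 fun h => hne (Equiv.ext h)
  have haS : a ∈ S := by
    by_contra h
    exact ha ((Perm.notMem_support.1 (hπ.2 ▸ h)).trans (Perm.notMem_support.1 (hγ.2 ▸ h)).symm)
  have haπ : a ∈ π.support := hπ.2 ▸ haS
  have haγ : a ∈ γ.support := hγ.2 ▸ haS
  obtain ⟨u, hu⟩ := Perm.exists_toList_eq_cons_cons haπ
  obtain ⟨v, hv⟩ := Perm.exists_toList_eq_cons_cons haγ
  have hlen : (π.toList a).length = S.card := by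
    rw [Perm.length_toList, hπ.1.cycleOf_eq (Perm.mem_support.1 haπ), hπ.2]
  have hperm : (π.toList a).Perm (γ.toList a) := List.perm_of_nodup_nodup_toFinset_eq
    (Perm.nodup_toList π a) (Perm.nodup_toList γ a)
    (by rw [hπ.1.toFinset_toList haπ, hγ.1.toFinset_toList haγ, hπ.2, hγ.2])
  have hmem := List.cycleEdges_add_cycleEdges_mem (S := boundedEdgeSets A)
    (hu ▸ Perm.nodup_toList π a) (hv ▸ Perm.nodup_toList γ a) (hu ▸ hv ▸ hperm) ha
    fun p hp hlt => hshort p hp (by rw [hu] at hlen; simp at hlen; omega)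
  rw [← hu, ← hv] at hmem
  have hprod {g : Perm ι} (hg : g.IsCycle ∧ g.support = S) (hag : a ∈ g.support) (k : β) :
      ∏ i ∈ S, A k i (g i) = edgeProd (A k) (g.toList a).cycleEdges := by
    rw [← hg.2, hg.1.prod_support_eq_edgeProd _ hag]
  simp_rw [hprod hπ haπ, hprod hγ haγ, ← edgeProd_add]
  exact hmem

end Cycles

section PrincipalMinors

variable {β R : Type*} {n : ℕ}

theorem sum_cyclesWithSupport_mem_boundedSubring [NormedCommRing R] [NormOneClass R]
    {A : β → Matrix (Fin n) (Fin n) R} {S : Finset (Fin n)}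
    (hminor : (fun k => principalMinor (A k) S) ∈ boundedSubring β R)
    (hterm : ∀ g : Perm (Fin n), g.support ⊆ S → g ∉ cyclesWithSupport S →
      (fun k => ∏ i ∈ S, A k i (g i)) ∈ boundedSubring β R) :
    ∑ g ∈ cyclesWithSupport S, (fun k => ∏ i ∈ S, A k i (g i)) ∈ boundedSubring β R := by
  set ε : ℤˣ := -(-1) ^ S.card
  set P : Finset (Perm (Fin n)) := {g | g.support ⊆ S}
  have hsub : cyclesWithSupport S ⊆ P := fun g hg => by
    simp [P, (mem_cyclesWithSupport.1 hg).2]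
  have hsign : ∀ g ∈ cyclesWithSupport S, Perm.sign g = ε := fun g hg => by
    rw [(mem_cyclesWithSupport.1 hg).1.sign, (mem_cyclesWithSupport.1 hg).2]
  have key (k : β) : ∑ g ∈ cyclesWithSupport S, ∏ i ∈ S, A k i (g i) =
      ε • (principalMinor (A k) S - ∑ g ∈ P \ cyclesWithSupport S,
        Perm.sign g • ∏ i ∈ S, A k i (g i)) := by
    rw [principalMinor_eq_sum, ← sum_sdiff hsub, add_sub_cancel_left,
      sum_congr rfl fun g hg => congrArg (· • _) (hsign g hg), ← smul_sum, smul_smul, ← sq,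
      Int.units_sq, one_smul]
  have hfun : ∑ g ∈ cyclesWithSupport S, (fun k => ∏ i ∈ S, A k i (g i)) =
      ε • ((fun k => principalMinor (A k) S) -
        ∑ g ∈ P \ cyclesWithSupport S, Perm.sign g • fun k => ∏ i ∈ S, A k i (g i)) := by
    ext k
    simp [Finset.sum_apply, key]
  rw [hfun, Units.smul_def]
  refine zsmul_mem (sub_mem hminor (sum_mem fun g hg => ?_)) _
  rw [Units.smul_def]
  obtain ⟨hgP, hgC⟩ := mem_sdiff.1 hg
  exact zsmul_mem (hterm g (by simpa [P] using hgP) hgC) _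

theorem prod_mem_boundedSubring_of_mem_cyclesWithSupport {𝕜 : Type*} [NormedField 𝕜]
    {A : β → Matrix (Fin n) (Fin n) 𝕜} {S : Finset (Fin n)}
    (hminor : (fun k => principalMinor (A k) S) ∈ boundedSubring β 𝕜) (hS : 1 < S.card)
    (hshort : ∀ l : List (Fin n), l.Nodup → l.length < S.card → l.cycleEdges ∈ boundedEdgeSets A)
    {π : Perm (Fin n)} (hπ : π ∈ cyclesWithSupport S) :
    (fun k => ∏ i ∈ S, A k i (π i)) ∈ boundedSubring β 𝕜 := by
  set c : Perm (Fin n) → β → 𝕜 := fun g k => ∏ i ∈ S, A k i (g i)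
  refine mem_boundedSubring_of_mul_self_eq (f := c π) (s := ∑ γ ∈ cyclesWithSupport S, c γ)
    (t := -∑ γ ∈ (cyclesWithSupport S).erase π, c π * c γ)
    (sum_cyclesWithSupport_mem_boundedSubring hminor fun g hg hgC =>
      prod_mem_boundedSubring_of_notMem_cyclesWithSupport hS hshort hg hgC)
    (neg_mem (sum_mem fun γ hγ =>
      mul_mem_boundedSubring_of_mem_cyclesWithSupport hshort hπ (mem_of_mem_erase hγ)
        (ne_of_mem_erase hγ).symm)) ?_
  rw [← add_sum_erase _ _ hπ, mul_add, mul_sum]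
  ring

theorem cycleEdges_mem_boundedEdgeSets {𝕜 : Type*} [NormedField 𝕜]
    {A : β → Matrix (Fin n) (Fin n) 𝕜}
    (hminor : ∀ I, (fun k => principalMinor (A k) I) ∈ boundedSubring β 𝕜)
    (l : List (Fin n)) (hl : l.Nodup) : l.cycleEdges ∈ boundedEdgeSets A := by
  induction hm : l.length using Nat.strong_induction_on generalizing l with
  | _ m ih =>
  match l, hl with
  | [], _ => exact zero_mem _
  | [i], _ =>
    simpa [mem_boundedEdgeSets, edgeProd, List.cycleEdges, principalMinor_singleton] using
      hminor {i}
  | a :: b :: t, hl =>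
    have hcard : (a :: b :: t).toFinset.card = m := by rw [List.toFinset_card_of_nodup hl, hm]
    have hπ : (a :: b :: t).formPerm ∈ cyclesWithSupport (a :: b :: t).toFinset :=
      mem_cyclesWithSupport.2 ⟨List.isCycle_formPerm hl (by simp),
        List.support_formPerm_of_nodup _ hl (by simp)⟩
    have := prod_mem_boundedSubring_of_mem_cyclesWithSupport (hminor _) (by rw [hcard, ← hm]; simp)
      (fun p hp hlt => ih _ (hcard ▸ hlt) p hp rfl) hπ
    rw [mem_boundedEdgeSets]
    simpa only [edgeProd_cycleEdges _ hl] using this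

end PrincipalMinors

theorem cycles_bounded_of_principal_minors_bounded {n : ℕ}
    (A : ℕ → Matrix (Fin n) (Fin n) ℂ)
    (hb : ∀ I : Finset (Fin n), ∃ B : ℝ, ∀ k, ‖principalMinor (A k) I‖ ≤ B) :
    ∀ π : Equiv.Perm (Fin n), π.IsCycle →
      ∃ B : ℝ, ∀ k, ‖∏ i ∈ π.support, A k i (π i)‖ ≤ B := by
  intro π hπ
  obtain ⟨x, hx⟩ := hπ.nonempty_support
  have := cycleEdges_mem_boundedEdgeSets (fun I => mem_boundedSubring_iff.2 (hb I)) _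
    (π.nodup_toList x)
  simp_rw [hπ.prod_support_eq_edgeProd _ hx]
  exact mem_boundedSubring_iff.1 this
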